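/- (Uniqueness of the paradoxical part) If S and R are both maximal E⁻¹-closed semikernels of a digraph G (maximal in the sense that no E⁻¹-closed semikernel T satisfies E⁻¹[S] ⊊ E⁻¹[T]), then E⁻¹[S] = E⁻¹[R]. -/

import Mathlib

/-- Out-neighbours of a set `X` under edge relation `E`. -/
def outS {V : Type*} (E : V → V → Prop) (X : Set V) : Set V := {y | ∃ x ∈ X, E x y}

/-- In-neighbours of a set `X` under edge relation `E`. -/
def inS {V : Type*} (E : V → V → Prop) (X : Set V) : Set V := {y | ∃ x ∈ X, E y x}

/-- `K` is a kernel of the digraph `(G,E)`. -/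
def IsKernel {V : Type*} (G : Set V) (E : V → V → Prop) (K : Set V) : Prop :=
  K ⊆ G ∧ inS E K = G \ K

/-- `S` is a semikernel of the digraph `(G,E)`. -/
def IsSemikernel {V : Type*} (G : Set V) (E : V → V → Prop) (S : Set V) : Prop :=
  S ⊆ G ∧ outS E S ⊆ inS E S ∧ inS E S ⊆ G \ S

/-!
Write `E⁻¹[X]` for `X ∪ inS E X`. If `S` is maximal and `R` is any `E⁻¹`-closed semikernel,
then `T := S ∪ (R \ E⁻¹[S])` is again an `E⁻¹`-closed semikernel, and
`E⁻¹[T] = E⁻¹[S] ∪ E⁻¹[R]`. Maximality of `S` forces `E⁻¹[R] ⊆ E⁻¹[S]`; exchanging the roles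
of two maximal semikernels gives equality.
-/

section

variable {V : Type*}

lemma inS_mono (E : V → V → Prop) {X Y : Set V} (h : X ⊆ Y) : inS E X ⊆ inS E Y :=
  fun _ ⟨x, hx, hEx⟩ => ⟨x, h hx, hEx⟩

lemma inS_union (E : V → V → Prop) (X Y : Set V) : inS E (X ∪ Y) = inS E X ∪ inS E Y := by
  ext y
  simp only [inS, Set.mem_ofPred_eq, Set.mem_union, or_and_right, exists_or]

variable {G : Set V} {E : V → V → Prop}

lemma IsSemikernel.union_diff (hE : ∀ x y, E x y → x ∈ G ∧ y ∈ G) {S R : Set V}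
    (hS : IsSemikernel G E S) (hScl : inS E (S ∪ inS E S) ⊆ S ∪ inS E S)
    (hR : IsSemikernel G E R) :
    IsSemikernel G E (S ∪ (R \ (S ∪ inS E S))) := by
  obtain ⟨hSG, hSout, hSin⟩ := hS
  obtain ⟨hRG, hRout, hRin⟩ := hR
  have hinS : inS E S ⊆ inS E (S ∪ (R \ (S ∪ inS E S))) := inS_mono E Set.subset_union_left
  refine ⟨Set.union_subset hSG (Set.sdiff_subset.trans hRG), ?_, ?_⟩
  · rintro y ⟨x, hx | ⟨hxR, hxS⟩, hxy⟩
    · exact hinS (hSout ⟨x, hx, hxy⟩)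
    by_cases hyS : y ∈ S ∪ inS E S
    · rcases hyS with hyS | hyS
      · exact absurd (Or.inr ⟨y, hyS, hxy⟩) hxS
      · exact hinS hyS
    obtain ⟨z, hzR, hyz⟩ := hRout ⟨x, hxR, hxy⟩
    have hzS : z ∉ S ∪ inS E S := fun hzS => hyS (hScl ⟨z, hzS, hyz⟩)
    exact ⟨z, Or.inr ⟨hzR, hzS⟩, hyz⟩
  · rintro y ⟨x, hx, hyx⟩
    refine ⟨(hE y x hyx).1, ?_⟩
    rcases hx with hxS | ⟨hxR, hxS⟩ <;> rintro (hyS | ⟨hyR, hyS⟩)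
    · exact (hSin ⟨x, hxS, hyx⟩).2 hyS
    · exact hyS (Or.inr ⟨x, hxS, hyx⟩)
    · exact hxS (Or.inr (hSout ⟨y, hyS, hyx⟩))
    · exact (hRin ⟨x, hxR, hyx⟩).2 hyR

lemma union_inS_union_diff {S : Set V} (hScl : inS E (S ∪ inS E S) ⊆ S ∪ inS E S) (R : Set V) :
    let T := S ∪ (R \ (S ∪ inS E S))
    T ∪ inS E T = (S ∪ inS E S) ∪ (R ∪ inS E R) := by
  intro T
  have hRT : R ⊆ (S ∪ inS E S) ∪ T := fun r hr => by
    by_cases h : r ∈ S ∪ inS E S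
    · exact Or.inl h
    · exact Or.inr (Or.inr ⟨hr, h⟩)
  apply subset_antisymm
  · have hT : T ⊆ S ∪ R := Set.union_subset_union_right S Set.sdiff_subset
    refine Set.union_subset (hT.trans ?_) ((inS_mono E hT).trans ?_)
    · exact Set.union_subset_union Set.subset_union_left Set.subset_union_left
    · rw [inS_union]
      exact Set.union_subset_union Set.subset_union_right Set.subset_union_right
  · have hST : S ⊆ T := Set.subset_union_left
    have hSTcl : S ∪ inS E S ⊆ T ∪ inS E T := Set.union_subset_union hST (inS_mono E hST)
    refine Set.union_subset hSTcl (Set.union_subset ?_ ?_)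
    · exact hRT.trans (Set.union_subset hSTcl Set.subset_union_left)
    · refine (inS_mono E hRT).trans ?_
      rw [inS_union]
      exact Set.union_subset (hScl.trans hSTcl) Set.subset_union_right

lemma union_inS_subset_of_maximal (hE : ∀ x y, E x y → x ∈ G ∧ y ∈ G) {S R : Set V}
    (hS : IsSemikernel G E S) (hScl : inS E (S ∪ inS E S) ⊆ S ∪ inS E S)
    (hSmax : ∀ T, IsSemikernel G E T → inS E (T ∪ inS E T) ⊆ T ∪ inS E T →
      ¬ (S ∪ inS E S ⊂ T ∪ inS E T))
    (hR : IsSemikernel G E R) (hRcl : inS E (R ∪ inS E R) ⊆ R ∪ inS E R) :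
    R ∪ inS E R ⊆ S ∪ inS E S := by
  have hT := hS.union_diff hE hScl hR
  have hTcl := union_inS_union_diff hScl R
  have hclosed : inS E ((S ∪ inS E S) ∪ (R ∪ inS E R)) ⊆ (S ∪ inS E S) ∪ (R ∪ inS E R) := by
    rw [inS_union]
    exact Set.union_subset_union hScl hRcl
  by_contra hRS
  refine hSmax _ hT ?_ ?_ <;> rw [hTcl]
  · exact hclosed
  · exact Set.ssubset_union_left_iff.mpr hRS

end

theorem stmt12 {V : Type*} (G : Set V) (E : V → V → Prop)
    (hE : ∀ x y, E x y → x ∈ G ∧ y ∈ G) (S R : Set V)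
    (hS : IsSemikernel G E S) (hScl : inS E (S ∪ inS E S) ⊆ S ∪ inS E S)
    (hSmax : ∀ T, IsSemikernel G E T → inS E (T ∪ inS E T) ⊆ T ∪ inS E T →
      ¬ (S ∪ inS E S ⊂ T ∪ inS E T))
    (hR : IsSemikernel G E R) (hRcl : inS E (R ∪ inS E R) ⊆ R ∪ inS E R)
    (hRmax : ∀ T, IsSemikernel G E T → inS E (T ∪ inS E T) ⊆ T ∪ inS E T →
      ¬ (R ∪ inS E R ⊂ T ∪ inS E T)) :
    S ∪ inS E S = R ∪ inS E R :=
  subset_antisymm (union_inS_subset_of_maximal hE hR hRcl hRmax hS hScl)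
    (union_inS_subset_of_maximal hE hS hScl hSmax hR hRcl)
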